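/- arXiv:math/0502451 — 3 statements merged into one kernel-verified Lean document; each statement's English description precedes it below -/
import Mathlib

section
/- Let L be a nilpotent Lie algebra over a field of characteristic zero and f : L → L a Lie algebra endomorphism. If the induced map on the abelianization L/[L,L] → L/[L,L] is the identity, then f is an automorphism of L. -/
/-!
Write `f = 1 + N` with `N = f - id`. Since `f` preserves brackets,
`N ⁅a, b⁆ = ⁅N a, f b⁆ + ⁅a, N b⁆`, and as `N` maps `L` into `[L, L]` this shows inductively that `N`
maps each term `Cⁱ` of the lower central series into `Cⁱ⁺¹`; the first term uses
`⁅C¹, Cⁱ⁆ ≤ Cⁱ⁺²`. As `L` is nilpotent, `N` is nilpotent, so `f = 1 + N` is invertible.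
-/

open LieModule LieSubmodule

namespace LieSubmodule

variable {R L M : Type*} [CommRing R] [LieRing L] [LieAlgebra R L]
  [AddCommGroup M] [Module R M] [LieRingModule L M] [LieModule R L M]

theorem lie_lie_le (I J : LieIdeal R L) (N : LieSubmodule R L M) :
    ⁅⁅I, J⁆, N⁆ ≤ ⁅I, ⁅J, N⁆⁆ ⊔ ⁅J, ⁅I, N⁆⁆ := by
  rw [lie_le_iff]
  intro x hx m hm
  rw [← mem_toSubmodule, lieIdeal_oper_eq_linear_span'] at hx
  induction hx using Submodule.span_induction with
  | mem x hx =>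
    obtain ⟨a, ha, b, hb, rfl⟩ := hx
    rw [lie_lie]
    exact sub_mem (mem_sup_left (lie_mem_lie ha (lie_mem_lie hb hm)))
      (mem_sup_right (lie_mem_lie hb (lie_mem_lie ha hm)))
  | zero => simp
  | add x y _ _ hx hy => rw [add_lie]; exact add_mem hx hy
  | smul c x _ hx => rw [smul_lie]; exact Submodule.smul_mem _ c hx

end LieSubmodule

namespace LieModule

variable {R L M : Type*} [CommRing R] [LieRing L] [LieAlgebra R L]
  [AddCommGroup M] [Module R M] [LieRingModule L M] [LieModule R L M]

theorem lie_lowerCentralSeries_le (i j : ℕ) :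
    ⁅lowerCentralSeries R L L i, lowerCentralSeries R L M j⁆ ≤
      lowerCentralSeries R L M (i + j + 1) := by
  induction i generalizing j with
  | zero => simp
  | succ i ih =>
    rw [lowerCentralSeries_succ]
    refine (lie_lie_le _ _ _).trans (sup_le ?_ ?_)
    · rw [show i + 1 + j + 1 = i + j + 1 + 1 by omega, lowerCentralSeries_succ]
      exact mono_lie_right _ (ih j)
    · rw [← lowerCentralSeries_succ, show i + 1 + j + 1 = i + (j + 1) + 1 by omega]
      exact ih (j + 1)

end LieModule

section

variable {R L : Type*} [CommRing R] [LieRing L] [LieAlgebra R L]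

theorem LieHom.apply_sub_mem_lowerCentralSeries_succ {f : L →ₗ⁅R⁆ L}
    (hf : ∀ x, f x - x ∈ lowerCentralSeries R L L 1) (i : ℕ) :
    ∀ x ∈ lowerCentralSeries R L L i, f x - x ∈ lowerCentralSeries R L L (i + 1) := by
  induction i with
  | zero => exact fun x _ ↦ hf x
  | succ i ih =>
    intro x hx
    rw [lowerCentralSeries_succ, ← mem_toSubmodule, lieIdeal_oper_eq_linear_span'] at hx
    refine (Submodule.span_le (p := (lowerCentralSeries R L L (i + 1 + 1)).toSubmodule.comap
      ((f : L →ₗ[R] L) - 1))).mpr ?_ hx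
    rintro _ ⟨a, -, b, hb, rfl⟩
    have hfb : f b ∈ lowerCentralSeries R L L i :=
      LieIdeal.map_lowerCentralSeries_le i (LieIdeal.mem_map hb)
    have hleibniz : f ⁅a, b⁆ - ⁅a, b⁆ = ⁅f a - a, f b⁆ + ⁅a, f b - b⁆ := by
      rw [LieHom.map_lie, sub_lie, lie_sub]; abel
    change f ⁅a, b⁆ - ⁅a, b⁆ ∈ lowerCentralSeries R L L (i + 1 + 1)
    rw [hleibniz]
    refine add_mem ?_ ?_
    · have := lie_lowerCentralSeries_le 1 i (lie_mem_lie (hf a) hfb)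
      rwa [show 1 + i + 1 = i + 1 + 1 by omega] at this
    · rw [lowerCentralSeries_succ _ _ _ (i + 1)]
      exact lie_mem_lie (mem_top a) (ih b hb)

theorem LieHom.isNilpotent_toLinearMap_sub_one [LieRing.IsNilpotent L] {f : L →ₗ⁅R⁆ L}
    (hf : ∀ x, f x - x ∈ lowerCentralSeries R L L 1) : IsNilpotent ((f : L →ₗ[R] L) - 1) := by
  have hpow (i : ℕ) (x : L) : (((f : L →ₗ[R] L) - 1) ^ i) x ∈ lowerCentralSeries R L L i := by
    induction i with
    | zero => simp
    | succ i ih =>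
      rw [pow_succ', Module.End.mul_apply]
      exact f.apply_sub_mem_lowerCentralSeries_succ hf i _ ih
  obtain ⟨n, hn⟩ := IsNilpotent.nilpotent R L L
  exact ⟨n, LinearMap.ext fun x ↦ by simpa [hn] using hpow n x⟩

end

theorem stmt1_general (k : Type) [Field k]
    (L : Type) [LieRing L] [LieAlgebra k L]
    [LieRing.IsNilpotent L]
    (f : L →ₗ⁅k⁆ L)
    (hab : ∀ x : L, f x - x ∈ LieModule.lowerCentralSeries k L L 1) :
    Function.Bijective f := by
  have hunit : IsUnit (f : L →ₗ[k] L) := by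
    simpa using (f.isNilpotent_toLinearMap_sub_one hab).isUnit_one_add
  exact (Module.End.isUnit_iff _).mp hunit

/-- If `f` is an endomorphism of a finite-dimensional nilpotent Lie algebra `L`
over a field of characteristic zero inducing the identity on the abelianization `L/[L,L]`
(i.e. `f x ≡ x` modulo the commutator ideal), then `f` is an automorphism. -/
theorem stmt1 (k : Type) [Field k] [CharZero k]
    (L : Type) [LieRing L] [LieAlgebra k L]
    [FiniteDimensional k L] [LieRing.IsNilpotent L]
    (f : L →ₗ⁅k⁆ L)
    (hab : ∀ x : L, f x - x ∈ LieModule.lowerCentralSeries k L L 1) :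
    Function.Bijective f :=
  stmt1_general k L f hab
end

section
/- Let 𝔥 be the 3-dimensional Heisenberg Lie algebra over ℝ (basis x, y, z with [x,y] = z, [x,z] = [y,z] = 0). Then 𝔥 is not quadratically presented: there is no surjective Lie algebra homomorphism from the free Lie algebra on two generators modulo an ideal generated by elements of bracket length exactly 2 onto 𝔥 inducing an isomorphism on abelianizations such that the kernel is generated in degree 2. Concretely: 𝔥 ≅ L(ℝ²)/Γ₃(L(ℝ²)) where Γ₃ is the third term of the lower central series, and Γ₃(L(ℝ²)) is not generated by degree-2 elements of L(ℝ²) as an ideal intersected with degree ≤ 2, i.e., 𝔥 is not isomorphic to any quotient of the free Lie algebra on 𝔥/[𝔥,𝔥] by an ideal generated by elements in the span of brackets of generators. -/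
/-- The degree-one part of the free Lie algebra on a type `X` over `k`:
the `k`-span of the generators. -/
noncomputable def degreeOnePart (k X : Type) [Field k] : Submodule k (FreeLieAlgebra k X) :=
  Submodule.span k (Set.range (FreeLieAlgebra.of k (X := X)))

/-- The space of quadratic elements (bracket length exactly two) of the free Lie algebra:
the span of brackets of two degree-one elements.  (Taking `X` to be a basis of a vector
space `V`, this is `Λ²V ⊂ L(V)`.) -/
noncomputable def quadraticPart (k X : Type) [Field k] : Submodule k (FreeLieAlgebra k X) :=
  Submodule.span k
    {z | ∃ a ∈ degreeOnePart k X, ∃ b ∈ degreeOnePart k X, z = ⁅a, b⁆}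

/-- The closed ideal (pro-nilpotent closure) generated by a subspace `W` of the free Lie
algebra: the intersection over all `M` of the ideal generated by `W` together with the
`M`-th term of the lower central series.  Quotienting the free (pro-nilpotent) Lie
algebra by this ideal realises the quotient by the ideal topologically generated by `W`. -/
noncomputable def closedIdealGenBy (k X : Type) [Field k] (W : Submodule k (FreeLieAlgebra k X)) :
    LieIdeal k (FreeLieAlgebra k X) :=
  ⨅ M : ℕ, (LieSubmodule.lieSpan k (FreeLieAlgebra k X) (W : Set (FreeLieAlgebra k X)) ⊔
    LieModule.lowerCentralSeries k (FreeLieAlgebra k X) (FreeLieAlgebra k X) M)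

/-- A Lie algebra `𝔤` over `k` is quadratically presented if it is isomorphic to the
quotient of a free Lie algebra `L(V)` (on a vector space `V`, here presented by a basis
type `X`) by the closed ideal generated by a subspace `W ⊆ Λ²V` of elements of bracket
length exactly two. -/
def QuadraticallyPresented (k : Type) [Field k] (𝔤 : Type) [LieRing 𝔤]
    [LieAlgebra k 𝔤] : Prop :=
  ∃ (X : Type) (W : Submodule k (FreeLieAlgebra k X)),
    W ≤ quadraticPart k X ∧
    Nonempty (𝔤 ≃ₗ⁅k⁆ (FreeLieAlgebra k X ⧸ closedIdealGenBy k X W))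

/-!
The cubic relation `⁅x, ⁅x, y⁆⁆ = 0` of `H` does not follow from quadratic ones. Suppose
`φ : L(X) → H` is onto with kernel the closed ideal generated by quadratic elements `W`. Let
`ρ : H → 𝔫` be the linear map to strictly upper triangular `4 × 4` matrices sending `x, y, z` to
`A, B, 0`, where `⁅A, ⁅A, B⁆⁆ ≠ 0`, and let `f : L(X) → 𝔫` be the Lie map extending `ρ ∘ φ` on
generators. On quadratic elements `f = κ ∘ φ` with `κ z = ⁅A, B⁆`, so `f` kills `W`; as `𝔫` is
three-step nilpotent, `f` kills the whole kernel of `φ`. But `f ≡ ρ ∘ φ` modulo matrices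
supported on and above the second superdiagonal, so for lifts `u, v` of `x, y` the element
`⁅u, ⁅u, v⁆⁆ ∈ ker φ` is sent to `⁅A, ⁅A, B⁆⁆ ≠ 0`.
-/

attribute [local instance 100] LieRing.ofAssociativeRing

namespace Matrix

def superdiagFiltration (R : Type*) [CommRing R] (n k : ℕ) :
    Submodule R (Matrix (Fin n) (Fin n) R) where
  carrier := {M | ∀ i j : Fin n, (j : ℕ) < i + k → M i j = 0}
  add_mem' ha hb i j h := by simp [ha i j h, hb i j h]
  zero_mem' _ _ _ := rfl
  smul_mem' c _ ha i j h := by simp [ha i j h]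

variable {R : Type*} [CommRing R] {n a b k : ℕ} {M N : Matrix (Fin n) (Fin n) R}

local notation "𝓕" => superdiagFiltration R n

theorem mul_mem_superdiagFiltration (hM : M ∈ 𝓕 a) (hN : N ∈ 𝓕 b) : M * N ∈ 𝓕 (a + b) := by
  intro i j h
  rw [mul_apply]
  refine Finset.sum_eq_zero fun l _ => ?_
  by_cases hl : (l : ℕ) < i + a
  · rw [hM i l hl, zero_mul]
  · rw [hN l j (by omega), mul_zero]

theorem lie_mem_superdiagFiltration (hM : M ∈ 𝓕 a) (hN : N ∈ 𝓕 b) : ⁅M, N⁆ ∈ 𝓕 (a + b) :=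
  sub_mem (mul_mem_superdiagFiltration hM hN) (add_comm b a ▸ mul_mem_superdiagFiltration hN hM)

theorem superdiagFiltration_antitone : Antitone (superdiagFiltration R n) :=
  fun _ _ hab _ hM i j h => hM i j (by omega)

theorem eq_zero_of_mem_superdiagFiltration (hk : n ≤ k) (hM : M ∈ 𝓕 k) : M = 0 := by
  ext i j
  exact hM i j (by omega)

theorem lie_lie_eq_of_sub_mem_superdiagFiltration {A B : Matrix (Fin n) (Fin n) R} (hn : n ≤ 4)
    (hA : A ∈ 𝓕 1) (hB : B ∈ 𝓕 1) (hM : M - A ∈ 𝓕 2) (hN : N - B ∈ 𝓕 2) :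
    ⁅M, ⁅M, N⁆⁆ = ⁅A, ⁅A, B⁆⁆ := by
  have hM₁ : M ∈ 𝓕 1 := by
    simpa using add_mem (superdiagFiltration_antitone (by norm_num) hM) hA
  have hN₁ : N ∈ 𝓕 1 := by
    simpa using add_mem (superdiagFiltration_antitone (by norm_num) hN) hB
  have h₃ : ⁅M, N⁆ - ⁅A, B⁆ ∈ 𝓕 3 := by
    rw [show ⁅M, N⁆ - ⁅A, B⁆ = ⁅M - A, N⁆ + ⁅A, N - B⁆ by simp only [sub_lie, lie_sub]; abel]
    exact add_mem (lie_mem_superdiagFiltration hM hN₁) (lie_mem_superdiagFiltration hA hN)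
  rw [← sub_eq_zero]
  refine eq_zero_of_mem_superdiagFiltration hn ?_
  rw [show ⁅M, ⁅M, N⁆⁆ - ⁅A, ⁅A, B⁆⁆ = ⁅M - A, ⁅M, N⁆⁆ + ⁅A, ⁅M, N⁆ - ⁅A, B⁆⁆ by
    simp only [sub_lie, lie_sub]; abel]
  exact add_mem (lie_mem_superdiagFiltration hM (lie_mem_superdiagFiltration hM₁ hN₁))
    (lie_mem_superdiagFiltration hA h₃)

theorem apply_mem_superdiagFiltration_of_mem_lowerCentralSeries {L : Type*} [LieRing L]
    [LieAlgebra R L] (f : L →ₗ⁅R⁆ Matrix (Fin n) (Fin n) R) (hf : ∀ u, f u ∈ 𝓕 1) :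
    ∀ k, ∀ u ∈ LieModule.lowerCentralSeries R L L k, f u ∈ 𝓕 (k + 1)
  | 0, u, _ => hf u
  | k + 1, u, hu => by
    rw [LieModule.lowerCentralSeries_succ, ← LieSubmodule.mem_toSubmodule,
      LieSubmodule.lieIdeal_oper_eq_linear_span'] at hu
    induction hu using Submodule.span_induction with
    | mem _ hv =>
      obtain ⟨v, -, w, hw, rfl⟩ := hv
      rw [f.map_lie, add_comm]
      exact lie_mem_superdiagFiltration (hf v)
        (apply_mem_superdiagFiltration_of_mem_lowerCentralSeries f hf k w hw)
    | zero => rw [map_zero]; exact zero_mem _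
    | add _ _ _ _ hu hv => rw [map_add]; exact add_mem hu hv
    | smul c _ _ hu => rw [map_smul]; exact Submodule.smul_mem _ c hu

theorem exists_mem_superdiagFiltration_one_lie_lie_ne_zero [Nontrivial R] :
    ∃ A B : Matrix (Fin 4) (Fin 4) R, A ∈ superdiagFiltration R 4 1 ∧
      B ∈ superdiagFiltration R 4 1 ∧ ⁅A, ⁅A, B⁆⁆ ≠ 0 := by
  refine ⟨!![0, 1, 0, 0; 0, 0, 1, 0; 0, 0, 0, 0; 0, 0, 0, 0],
    !![0, 0, 0, 0; 0, 0, 0, 0; 0, 0, 0, 1; 0, 0, 0, 0], ?_, ?_, fun h => ?_⟩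
  · intro i j; fin_cases i <;> fin_cases j <;> simp
  · intro i j; fin_cases i <;> fin_cases j <;> simp
  · have h₀₃ := congrFun (congrFun h 0) 3
    simp [Ring.lie_def] at h₀₃

end Matrix

namespace FreeLieAlgebra

variable {R X : Type*} [CommRing R]

@[elab_as_elim]
theorem induction_on {p : FreeLieAlgebra R X → Prop} (u : FreeLieAlgebra R X)
    (of : ∀ t, p (of R t)) (zero : p 0) (add : ∀ u v, p u → p v → p (u + v))
    (smul : ∀ (c : R) u, p u → p (c • u)) (lie : ∀ u v, p u → p v → p ⁅u, v⁆) : p u := by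
  let K : LieSubalgebra R (FreeLieAlgebra R X) :=
    { carrier := {u | p u}
      add_mem' := add _ _
      zero_mem' := zero
      smul_mem' := smul
      lie_mem' := lie _ _ }
  let ι : FreeLieAlgebra R X →ₗ⁅R⁆ K := lift R fun t => ⟨FreeLieAlgebra.of R t, of t⟩
  have hι : K.incl.comp ι = LieHom.id := hom_ext fun t => by simp [ι]
  show u ∈ K
  rw [← LieHom.id_apply (R := R) u, ← hι]
  exact (ι u).2

open Matrix

variable {n : ℕ}

theorem lift_apply_mem_superdiagFiltration_one {g : X → Matrix (Fin n) (Fin n) R}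
    (hg : ∀ t, g t ∈ superdiagFiltration R n 1) (u : FreeLieAlgebra R X) :
    lift R g u ∈ superdiagFiltration R n 1 := by
  induction u using induction_on with
  | of t => simpa using hg t
  | zero => simp
  | add u v hu hv => simpa using add_mem hu hv
  | smul c u hu => simpa using Submodule.smul_mem _ c hu
  | lie u v hu hv =>
    simpa using superdiagFiltration_antitone (by norm_num) (lie_mem_superdiagFiltration hu hv)

theorem lift_sub_mem_superdiagFiltration_two {H : Type*} [LieRing H] [LieAlgebra R H]
    (φ : FreeLieAlgebra R X →ₗ⁅R⁆ H) (ρ : H →ₗ[R] Matrix (Fin n) (Fin n) R)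
    (hρ : ∀ h, ρ h ∈ superdiagFiltration R n 1) (hρ_lie : ∀ h h' : H, ρ ⁅h, h'⁆ = 0)
    (u : FreeLieAlgebra R X) :
    lift R (fun t => ρ (φ (of R t))) u - ρ (φ u) ∈ superdiagFiltration R n 2 := by
  induction u using induction_on with
  | of t => simp
  | zero => simp
  | add u v hu hv => simpa [add_sub_add_comm] using add_mem hu hv
  | smul c u hu => simpa [← smul_sub] using Submodule.smul_mem _ c hu
  | lie u v _ _ =>
    simpa [hρ_lie] using lie_mem_superdiagFiltration
      (lift_apply_mem_superdiagFiltration_one (fun t => hρ _) u)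
      (lift_apply_mem_superdiagFiltration_one (fun t => hρ _) v)

end FreeLieAlgebra

section Presentation

open FreeLieAlgebra

variable {k X : Type} [Field k]

theorem lift_apply_of_mem_quadraticPart {H M : Type*} [LieRing H] [LieAlgebra k H] [LieRing M]
    [LieAlgebra k M] (φ : FreeLieAlgebra k X →ₗ⁅k⁆ H) (ρ κ : H →ₗ[k] M)
    (hκ : ∀ h h', ⁅ρ h, ρ h'⁆ = κ ⁅h, h'⁆) {w : FreeLieAlgebra k X}
    (hw : w ∈ quadraticPart k X) : lift k (fun t => ρ (φ (of k t))) w = κ (φ w) := by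
  set f := lift k (fun t => ρ (φ (of k t)))
  have hdeg : Set.EqOn f.toLinearMap (ρ ∘ₗ φ.toLinearMap) (degreeOnePart k X) :=
    LinearMap.eqOn_span' (by rintro _ ⟨t, rfl⟩; simp [f])
  refine LinearMap.eqOn_span' (f := f.toLinearMap) (g := κ ∘ₗ φ.toLinearMap) ?_ hw
  rintro _ ⟨a, ha, b, hb, rfl⟩
  have ha' : f a = ρ (φ a) := hdeg ha
  have hb' : f b = ρ (φ b) := hdeg hb
  simp [ha', hb', hκ]

theorem mem_closedIdealGenBy {W : Submodule k (FreeLieAlgebra k X)} {w : FreeLieAlgebra k X}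
    (hw : w ∈ W) : w ∈ closedIdealGenBy k X W := by
  rw [closedIdealGenBy, LieSubmodule.mem_iInf]
  exact fun _ => LieSubmodule.mem_sup_left (LieSubmodule.subset_lieSpan hw)

theorem closedIdealGenBy_le {W : Submodule k (FreeLieAlgebra k X)}
    {J : LieIdeal k (FreeLieAlgebra k X)} (m : ℕ) (hW : (W : Set (FreeLieAlgebra k X)) ⊆ J)
    (hm : LieModule.lowerCentralSeries k (FreeLieAlgebra k X) (FreeLieAlgebra k X) m ≤ J) :
    closedIdealGenBy k X W ≤ J :=
  (iInf_le _ m).trans (sup_le (LieSubmodule.lieSpan_le.mpr hW) hm)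

theorem ker_le_ker_lift_of_quadraticPart {H M : Type*} [LieRing H] [LieAlgebra k H] [LieRing M]
    [LieAlgebra k M] {W : Submodule k (FreeLieAlgebra k X)} (hW : W ≤ quadraticPart k X)
    {φ : FreeLieAlgebra k X →ₗ⁅k⁆ H} (hker : φ.ker = closedIdealGenBy k X W) (ρ κ : H →ₗ[k] M)
    (hκ : ∀ h h', ⁅ρ h, ρ h'⁆ = κ ⁅h, h'⁆) (m : ℕ)
    (hm : LieModule.lowerCentralSeries k (FreeLieAlgebra k X) (FreeLieAlgebra k X) m ≤
      (lift k (fun t => ρ (φ (of k t)))).ker) :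
    φ.ker ≤ (lift k (fun t => ρ (φ (of k t)))).ker := by
  refine hker ▸ closedIdealGenBy_le m (fun w hw => ?_) hm
  rw [SetLike.mem_coe, LieHom.mem_ker, lift_apply_of_mem_quadraticPart φ ρ κ hκ (hW hw),
    LieHom.mem_ker.mp (hker ▸ mem_closedIdealGenBy hw), map_zero]

theorem QuadraticallyPresented.exists_surjective_lieHom {H : Type} [LieRing H] [LieAlgebra k H]
    (h : QuadraticallyPresented k H) :
    ∃ (X : Type) (W : Submodule k (FreeLieAlgebra k X)) (φ : FreeLieAlgebra k X →ₗ⁅k⁆ H),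
      W ≤ quadraticPart k X ∧ Function.Surjective φ ∧ φ.ker = closedIdealGenBy k X W := by
  obtain ⟨X, W, hW, ⟨e⟩⟩ := h
  let π : FreeLieAlgebra k X →ₗ⁅k⁆ FreeLieAlgebra k X ⧸ closedIdealGenBy k X W :=
    { LieSubmodule.Quotient.mk' _ with map_lie' := rfl }
  refine ⟨X, W, e.symm.toLieHom.comp π, hW,
    e.symm.surjective.comp (LieSubmodule.Quotient.surjective_mk' _), ?_⟩
  ext u
  exact (EmbeddingLike.map_eq_zero_iff (f := e.symm)).trans (LieSubmodule.Quotient.mk_eq_zero _)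

end Presentation

section Heisenberg

variable {k H M : Type*} [CommRing k] [LieRing H] [LieAlgebra k H] {x y z : H}

theorem exists_linearMap_apply_eq_of_linearIndependent [AddCommGroup M] [Module k M]
    (hind : LinearIndependent k ![x, y, z]) (hspan : Submodule.span k {x, y, z} = ⊤)
    (a b c : M) : ∃ g : H →ₗ[k] M, g x = a ∧ g y = b ∧ g z = c := by
  let basis := Module.Basis.mk hind (by
    rw [Matrix.range_cons, Matrix.range_cons, Matrix.range_cons_empty, Set.singleton_union,
      Set.singleton_union, hspan])
  have hg (i : Fin 3) : basis.constr k ![a, b, c] (![x, y, z] i) = ![a, b, c] i :=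
    Module.Basis.mk_apply hind _ i ▸ basis.constr_basis k _ i
  exact ⟨basis.constr k ![a, b, c], hg 0, hg 1, hg 2⟩

theorem map_lie_eq_zero_of_map_eq_zero [AddCommGroup M] [Module k M]
    (hspan : Submodule.span k {x, y, z} = ⊤) (hxy : ⁅x, y⁆ = z) (hxz : ⁅x, z⁆ = 0)
    (hyz : ⁅y, z⁆ = 0) (g : H →ₗ[k] M) (hg : g z = 0) (h h' : H) : g ⁅h, h'⁆ = 0 := by
  have hyx : ⁅y, x⁆ = -z := by rw [← lie_skew, hxy]
  have hzx : ⁅z, x⁆ = 0 := by rw [← lie_skew, hxz, neg_zero]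
  have hzy : ⁅z, y⁆ = 0 := by rw [← lie_skew, hyz, neg_zero]
  have : (LieModule.toEnd k H H : H →ₗ[k] Module.End k H).compr₂ g = 0 := by
    refine LinearMap.ext_on hspan fun a ha => LinearMap.ext_on hspan fun b hb => ?_
    rcases ha with rfl | rfl | rfl <;> rcases hb with rfl | rfl | rfl <;>
      simp [hxy, hxz, hyz, hyx, hzx, hzy, hg]
  exact LinearMap.congr_fun₂ this h h'

theorem lie_map_map_eq_map_lie [LieRing M] [LieAlgebra k M]
    (hspan : Submodule.span k {x, y, z} = ⊤) (hxy : ⁅x, y⁆ = z) (hxz : ⁅x, z⁆ = 0)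
    (hyz : ⁅y, z⁆ = 0) (g₁ g₂ : H →ₗ[k] M) (hz₁ : g₁ z = 0) (hz₂ : g₂ z = ⁅g₁ x, g₁ y⁆)
    (h h' : H) : ⁅g₁ h, g₁ h'⁆ = g₂ ⁅h, h'⁆ := by
  have hyx : ⁅y, x⁆ = -z := by rw [← lie_skew, hxy]
  have hzx : ⁅z, x⁆ = 0 := by rw [← lie_skew, hxz, neg_zero]
  have hzy : ⁅z, y⁆ = 0 := by rw [← lie_skew, hyz, neg_zero]
  have : (LieModule.toEnd k M M : M →ₗ[k] Module.End k M).compl₁₂ g₁ g₁ =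
      (LieModule.toEnd k H H : H →ₗ[k] Module.End k H).compr₂ g₂ := by
    refine LinearMap.ext_on hspan fun a ha => LinearMap.ext_on hspan fun b hb => ?_
    rcases ha with rfl | rfl | rfl <;> rcases hb with rfl | rfl | rfl <;>
      simp [hxy, hxz, hyz, hyx, hzx, hzy, hz₁, hz₂]
  exact LinearMap.congr_fun₂ this h h'

end Heisenberg

/-- The three-dimensional real Heisenberg Lie algebra (any real Lie algebra
`H` spanned by linearly independent elements `x, y, z` with `⁅x,y⁆ = z` and `z` central)
is not quadratically presented. -/
theorem stmt8 (H : Type) [LieRing H] [LieAlgebra ℝ H]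
    (x y z : H)
    (hxy : ⁅x, y⁆ = z) (hxz : ⁅x, z⁆ = 0) (hyz : ⁅y, z⁆ = 0)
    (hind : LinearIndependent ℝ ![x, y, z])
    (hspan : Submodule.span ℝ {x, y, z} = ⊤) :
    ¬ QuadraticallyPresented ℝ H := by
  intro hH
  obtain ⟨X, W, φ, hW, hφ, hker⟩ := hH.exists_surjective_lieHom
  obtain ⟨A, B, hA, hB, hAB⟩ := Matrix.exists_mem_superdiagFiltration_one_lie_lie_ne_zero (R := ℝ)
  obtain ⟨ρ, hρx, hρy, hρz⟩ := exists_linearMap_apply_eq_of_linearIndependent hind hspan A B 0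
  obtain ⟨κ, -, -, hκz⟩ :=
    exists_linearMap_apply_eq_of_linearIndependent hind hspan 0 0 ⁅ρ x, ρ y⁆
  have hρ₁ : ∀ h, ρ h ∈ Matrix.superdiagFiltration ℝ 4 1 := fun h =>
    (Submodule.span_le (p := (Matrix.superdiagFiltration ℝ 4 1).comap ρ)).mpr
      (by simp [Set.insert_subset_iff, hρx, hρy, hρz, hA, hB]) (hspan ▸ Submodule.mem_top)
  have hρ_lie := map_lie_eq_zero_of_map_eq_zero hspan hxy hxz hyz ρ hρz
  let f := FreeLieAlgebra.lift ℝ fun t => ρ (φ (FreeLieAlgebra.of ℝ t))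
  have hkerf : φ.ker ≤ f.ker := ker_le_ker_lift_of_quadraticPart hW hker ρ κ
    (lie_map_map_eq_map_lie hspan hxy hxz hyz ρ κ hρz hκz) 3 fun u hu =>
      Matrix.eq_zero_of_mem_superdiagFiltration le_rfl <|
        Matrix.apply_mem_superdiagFiltration_of_mem_lowerCentralSeries f
          (FreeLieAlgebra.lift_apply_mem_superdiagFiltration_one fun t => hρ₁ _) 3 u hu
  obtain ⟨u, hu⟩ := hφ x
  obtain ⟨v, hv⟩ := hφ y
  have hq : f ⁅u, ⁅u, v⁆⁆ = 0 := hkerf (by simp [LieHom.mem_ker, hu, hv, hxy, hxz])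
  have hfu := FreeLieAlgebra.lift_sub_mem_superdiagFiltration_two φ ρ hρ₁ hρ_lie u
  have hfv := FreeLieAlgebra.lift_sub_mem_superdiagFiltration_two φ ρ hρ₁ hρ_lie v
  rw [hu, hρx] at hfu
  rw [hv, hρy] at hfv
  rw [f.map_lie, f.map_lie, Matrix.lie_lie_eq_of_sub_mem_superdiagFiltration le_rfl hA hB hfu hfv]
    at hq
  exact hAB hq
end

section
/- Let Γ = H ⋊ Λ where H is the integral Heisenberg group H = {(v,w) : v ∈ ℤ², w ∈ (1/2)ℤ} with multiplication (v,w)·(v',w') = (v+v', w+w'+(1/2)det(v,v')), and Λ = ℤ² acts via ϑ(a) = ϑ(b) = M = [[2,3],[1,2]] (acting on the v-coordinate, trivially on w). Then the commutator subgroup [Γ, H] has finite index in H. Consequently the image of H in the abelianization Γ/[Γ,Γ] is finite. -/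
noncomputable section

/-- The integral Heisenberg group `H = {(v, w) : v ∈ ℤ², w ∈ ½ℤ}`.  We represent
`w = wtwice/2` by its double `wtwice ∈ ℤ`, so that the multiplication
`(v,w)(v',w') = (v + v', w + w' + ½ det(v,v'))` becomes integral:
`wtwice ↦ wtwice + wtwice' + det(v,v')`. -/
structure Heis where
  v1 : ℤ
  v2 : ℤ
  wtwice : ℤ

namespace Heis

/-- Heisenberg multiplication: `(v,w)·(v',w') = (v+v', w+w'+½det(v,v'))`, with the
central coordinate stored as its double. -/
def hmul (a b : Heis) : Heis :=
  ⟨a.v1 + b.v1, a.v2 + b.v2, a.wtwice + b.wtwice + (a.v1 * b.v2 - a.v2 * b.v1)⟩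

instance : Group Heis where
  mul := hmul
  one := ⟨0, 0, 0⟩
  inv a := ⟨-a.v1, -a.v2, -a.wtwice⟩
  mul_assoc a b c := by
    obtain ⟨a1, a2, a3⟩ := a; obtain ⟨b1, b2, b3⟩ := b; obtain ⟨c1, c2, c3⟩ := c
    show hmul (hmul _ _) _ = hmul _ (hmul _ _)
    simp only [hmul, Heis.mk.injEq]
    refine ⟨by ring, by ring, by ring⟩
  one_mul a := by
    obtain ⟨a1, a2, a3⟩ := a
    show hmul ⟨0, 0, 0⟩ _ = _
    simp only [hmul, Heis.mk.injEq]
    refine ⟨by ring, by ring, by ring⟩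
  mul_one a := by
    obtain ⟨a1, a2, a3⟩ := a
    show hmul _ ⟨0, 0, 0⟩ = _
    simp only [hmul, Heis.mk.injEq]
    refine ⟨by ring, by ring, by ring⟩
  inv_mul_cancel a := by
    obtain ⟨a1, a2, a3⟩ := a
    show hmul _ _ = ⟨0, 0, 0⟩
    simp only [hmul, Heis.mk.injEq]
    refine ⟨by ring, by ring, by ring⟩

end Heis

/-- The matrix `M = [[2,3],[1,2]]`, as a unit (it lies in `SL₂(ℤ)`). -/
def Pu : (Matrix (Fin 2) (Fin 2) ℤ)ˣ where
  val := !![2, 3; 1, 2]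
  inv := !![2, -3; -1, 2]
  val_inv := by
    ext i j
    fin_cases i <;> fin_cases j <;>
      simp [Matrix.mul_apply, Fin.sum_univ_two, Matrix.one_apply]
  inv_val := by
    ext i j
    fin_cases i <;> fin_cases j <;>
      simp [Matrix.mul_apply, Fin.sum_univ_two, Matrix.one_apply]

/-- A `2×2` integer matrix acts on the Heisenberg group, linearly on `v` and trivially
on the centre. -/
def act (A : Matrix (Fin 2) (Fin 2) ℤ) (h : Heis) : Heis :=
  ⟨A 0 0 * h.v1 + A 0 1 * h.v2, A 1 0 * h.v1 + A 1 1 * h.v2, h.wtwice⟩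

lemma act_act (A B : Matrix (Fin 2) (Fin 2) ℤ) (h : Heis) :
    act A (act B h) = act (A * B) h := by
  simp only [act, Matrix.mul_apply, Fin.sum_univ_two, Heis.mk.injEq]
  exact ⟨by ring, by ring, trivial⟩

lemma act_one (h : Heis) : act 1 h = h := by
  obtain ⟨a1, a2, a3⟩ := h
  simp [act, Matrix.one_apply]

lemma det_Pu_zpow (n : ℤ) : ((Pu ^ n : (Matrix (Fin 2) (Fin 2) ℤ)ˣ) :
    Matrix (Fin 2) (Fin 2) ℤ).det = 1 := by
  have h1 : Units.map Matrix.detMonoidHom Pu = 1 := by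
    ext
    show (Pu : Matrix (Fin 2) (Fin 2) ℤ).det = 1
    simp [Pu, Matrix.det_fin_two_of]
  have h2 : Units.map Matrix.detMonoidHom (Pu ^ n) = 1 := by
    rw [map_zpow, h1, one_zpow]
  have h3 := congrArg Units.val h2
  simp only [Units.coe_map, Matrix.coe_detMonoidHom, MonoidHom.coe_coe,
    Units.val_one] at h3
  exact h3

lemma act_mul (n : ℤ) (a b : Heis) :
    act ((Pu ^ n : (Matrix (Fin 2) (Fin 2) ℤ)ˣ) : Matrix (Fin 2) (Fin 2) ℤ) (a * b) =
      act ((Pu ^ n : (Matrix (Fin 2) (Fin 2) ℤ)ˣ) : Matrix (Fin 2) (Fin 2) ℤ) a *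
      act ((Pu ^ n : (Matrix (Fin 2) (Fin 2) ℤ)ˣ) : Matrix (Fin 2) (Fin 2) ℤ) b := by
  set A := ((Pu ^ n : (Matrix (Fin 2) (Fin 2) ℤ)ˣ) : Matrix (Fin 2) (Fin 2) ℤ) with hA
  have hdet : A 0 0 * A 1 1 - A 0 1 * A 1 0 = 1 := by
    have h := det_Pu_zpow n
    rw [Matrix.det_fin_two] at h
    exact h
  obtain ⟨a1, a2, a3⟩ := a; obtain ⟨b1, b2, b3⟩ := b
  show act A (Heis.hmul _ _) = Heis.hmul (act A _) (act A _)
  simp only [act, Heis.hmul, Heis.mk.injEq]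
  refine ⟨by ring, by ring, ?_⟩
  linear_combination (a2 * b1 - a1 * b2) * hdet

/-- The automorphism of the Heisenberg group given by the `n`-th power of `M`. -/
def heisAut (n : ℤ) : Heis ≃* Heis where
  toFun := act ((Pu ^ n : (Matrix (Fin 2) (Fin 2) ℤ)ˣ) : Matrix (Fin 2) (Fin 2) ℤ)
  invFun := act ((Pu ^ (-n) : (Matrix (Fin 2) (Fin 2) ℤ)ˣ) : Matrix (Fin 2) (Fin 2) ℤ)
  left_inv h := by
    rw [act_act, ← Units.val_mul, ← zpow_add, neg_add_cancel, zpow_zero, Units.val_one,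
      act_one]
  right_inv h := by
    rw [act_act, ← Units.val_mul, ← zpow_add, add_neg_cancel, zpow_zero, Units.val_one,
      act_one]
  map_mul' := act_mul n

lemma heisAut_add (m n : ℤ) : heisAut (m + n) = heisAut m * heisAut n := by
  ext h
  show act _ h = act _ (act _ h)
  rw [act_act, ← Units.val_mul, ← zpow_add]

/-- The action of `Λ = ℤ²` on the Heisenberg group: both generators `a`, `b` of `ℤ²`
act via the matrix `M = [[2,3],[1,2]]`, so `(m, n)` acts via `M^(m+n)`. -/
def phi : Multiplicative (ℤ × ℤ) →* MulAut Heis :=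
  MonoidHom.mk' (fun g => heisAut (g.toAdd.1 + g.toAdd.2))
    (by
      intro x y
      show heisAut _ = _
      rw [show (x * y).toAdd = x.toAdd + y.toAdd from rfl]
      have : (x.toAdd.1 + y.toAdd.1) + (x.toAdd.2 + y.toAdd.2) =
          (x.toAdd.1 + x.toAdd.2) + (y.toAdd.1 + y.toAdd.2) := by ring
      rw [show (x.toAdd + y.toAdd).1 = x.toAdd.1 + y.toAdd.1 from rfl,
        show (x.toAdd + y.toAdd).2 = x.toAdd.2 + y.toAdd.2 from rfl, this,
        heisAut_add])

/-- `Γ = H ⋊ Λ`. -/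
abbrev Gam : Type := Heis ⋊[phi] Multiplicative (ℤ × ℤ)

/-- The copy of the Heisenberg group `H` inside `Γ`. -/
def HinGam : Subgroup Gam := (SemidirectProduct.inl : Heis →* Gam).range

/-!
Conjugating `n ∈ H` by a generator of `Λ` produces the commutator `ϑ(a) n · n⁻¹ ∈ [Γ, H]`,
whose `v`-part `(M - 1) v` runs over a lattice of index `|det (M - 1)| = 2` in `ℤ²`, while
commutators inside `H` give the central subgroup `w ∈ ℤ`. Together they cover the kernel of a
reduction `H → (ℤ/2)³`, so `[Γ, H]` has finite index in `H`; since `[Γ, H] ≤ [Γ, Γ]`, the image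
of `H` in the abelianization is then a quotient of a finite group.
-/

open scoped commutatorElement

namespace SemidirectProduct

variable {N G : Type*} [Group N] [Group G] {φ : G →* MulAut N}

theorem commutatorElement_inr_inl (g : G) (n : N) :
    ⁅(inr g : N ⋊[φ] G), (inl n : N ⋊[φ] G)⁆ = inl (φ g n * n⁻¹) := by
  rw [commutatorElement_def, map_mul, inl_aut, map_inv, map_inv]

theorem inl_mul_inv_mem_commutator_range_inl (g : G) (n : N) :
    (inl (φ g n * n⁻¹) : N ⋊[φ] G) ∈ ⁅(⊤ : Subgroup (N ⋊[φ] G)), inl.range⁆ := by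
  rw [← commutatorElement_inr_inl]
  exact Subgroup.commutator_mem_commutator (Subgroup.mem_top _) ⟨n, rfl⟩

theorem inl_commutatorElement_mem_commutator_range_inl (a b : N) :
    (inl ⁅a, b⁆ : N ⋊[φ] G) ∈ ⁅(⊤ : Subgroup (N ⋊[φ] G)), inl.range⁆ := by
  rw [map_commutatorElement]
  exact Subgroup.commutator_mem_commutator (Subgroup.mem_top _) ⟨b, rfl⟩

end SemidirectProduct

namespace Heis

@[simp]
lemma mk_mul_mk (x y z x' y' z' : ℤ) :
    (⟨x, y, z⟩ : Heis) * ⟨x', y', z'⟩ = ⟨x + x', y + y', z + z' + (x * y' - y * x')⟩ :=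
  rfl

@[simp]
lemma inv_mk (x y z : ℤ) : (⟨x, y, z⟩ : Heis)⁻¹ = ⟨-x, -y, -z⟩ := rfl

lemma commutatorElement_mk (x y z x' y' z' : ℤ) :
    ⁅(⟨x, y, z⟩ : Heis), (⟨x', y', z'⟩ : Heis)⁆ = ⟨0, 0, 2 * (x * y' - y * x')⟩ := by
  simp only [commutatorElement_def, mk_mul_mk, inv_mk, mk.injEq]
  refine ⟨by ring, by ring, by ring⟩

/-- The correction `v₁v₂` makes the central coordinate additive mod 2. -/
def parityHom : Heis →* Multiplicative (ZMod 2 × ZMod 2 × ZMod 2) where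
  toFun h := .ofAdd (h.v1, h.v2, h.wtwice + h.v1 * h.v2)
  map_one' := rfl
  map_mul' := by
    rintro ⟨x, y, z⟩ ⟨x', y', z'⟩
    simp only [mk_mul_mk, ← ofAdd_add, Prod.mk_add_mk, Int.cast_add, Int.cast_mul,
      Int.cast_sub]
    have two_eq_zero : (2 : ZMod 2) = 0 := rfl
    congr 3
    linear_combination ((x : ZMod 2) * y') * two_eq_zero

lemma two_dvd_of_mem_ker_parityHom {h : Heis} (hh : h ∈ parityHom.ker) :
    2 ∣ h.v1 ∧ 2 ∣ h.v2 ∧ 2 ∣ h.wtwice := by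
  simp only [MonoidHom.mem_ker, parityHom, MonoidHom.coe_mk, OneHom.coe_mk, ofAdd_eq_one,
    Prod.mk_eq_zero, ← Int.cast_mul, ← Int.cast_add, ZMod.intCast_zmod_eq_zero_iff_dvd] at hh
  obtain ⟨h1, h2, h3⟩ := hh
  exact ⟨h1, h2, (Int.dvd_add_left (dvd_mul_of_dvd_left h1 _)).mp h3⟩

end Heis

lemma phi_ofAdd_one_zero (h : Heis) :
    phi (.ofAdd (1, 0)) h = ⟨2 * h.v1 + 3 * h.v2, h.v1 + 2 * h.v2, h.wtwice⟩ := by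
  simp [phi, heisAut, act, Pu]

lemma ker_parityHom_le_comap_commutator :
    Heis.parityHom.ker ≤ ⁅(⊤ : Subgroup Gam), HinGam⁆.comap SemidirectProduct.inl := by
  rintro ⟨x, y, z⟩ hh
  obtain ⟨⟨a, rfl⟩, ⟨b, rfl⟩, ⟨c, rfl⟩⟩ := Heis.two_dvd_of_mem_ker_parityHom hh
  -- `(M - 1) (3b - a, a - b) = (2a, 2b)`; the commutator in `H` then corrects the centre.
  let n : Heis := ⟨3 * b - a, a - b, 0⟩
  have decomp : (⟨2 * a, 2 * b, 2 * c⟩ : Heis) =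
      phi (.ofAdd (1, 0)) n * n⁻¹ *
        ⁅(⟨c + a ^ 2 - 3 * b ^ 2, 0, 0⟩ : Heis), (⟨0, 1, 0⟩ : Heis)⁆ := by
    simp only [phi_ofAdd_one_zero, Heis.commutatorElement_mk, n, Heis.inv_mk, Heis.mk_mul_mk,
      Heis.mk.injEq]
    refine ⟨by ring, by ring, by ring⟩
  rw [Subgroup.mem_comap, decomp, map_mul]
  exact Subgroup.mul_mem _ (SemidirectProduct.inl_mul_inv_mem_commutator_range_inl _ _)
    (SemidirectProduct.inl_commutatorElement_mem_commutator_range_inl _ _)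

theorem finiteIndex_comap_commutator :
    (⁅(⊤ : Subgroup Gam), HinGam⁆.comap SemidirectProduct.inl).FiniteIndex :=
  Subgroup.finiteIndex_of_le ker_parityHom_le_comap_commutator

/-- For `Γ = H ⋊ Λ` as above (the integral Heisenberg group `H` with
`Λ = ℤ²` acting through `ϑ(a) = ϑ(b) = M = [[2,3],[1,2]]`), the commutator subgroup
`[Γ, H]` has finite index in `H`; consequently the image of `H` in the abelianization
`Γ/[Γ,Γ]` is finite. -/
theorem stmt14 :
    (⁅(⊤ : Subgroup Gam), HinGam⁆.relIndex HinGam ≠ 0) ∧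
    Finite ((Abelianization.of.comp (SemidirectProduct.inl : Heis →* Gam)).range) := by
  have hS := finiteIndex_comap_commutator
  constructor
  · rw [HinGam, ← Subgroup.index_comap]
    exact hS.index_ne_zero
  · have hle : ⁅(⊤ : Subgroup Gam), HinGam⁆.comap SemidirectProduct.inl ≤
        (Abelianization.of.comp (SemidirectProduct.inl : Heis →* Gam)).ker := by
      rw [← MonoidHom.comap_ker, Abelianization.ker_of, commutator_def]
      exact Subgroup.comap_mono (Subgroup.commutator_mono le_rfl le_top)
    have hker := Subgroup.finiteIndex_of_le hle
    apply Nat.finite_of_card_ne_zero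
    rw [← Subgroup.index_ker]
    exact hker.index_ne_zero

end
end
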